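/- arXiv:math/0503120 — 6 statements merged into one kernel-verified Lean document; each statement's English description precedes it below -/
import Mathlib

section
/- Let 0 < q < 1, let ν be a positive integer and let z ∈ D_q. Then for every t ∈ R_q(z) the series t^ν·Σ_{n=0}^∞ q^{−ν(n+z)}·exp(−t·q^{−(n+z)}·[n+z]_q) defining F_q^{+,ν}(t,z) converges absolutely, and the function t ↦ F_q^{+,ν}(t,z) is holomorphic on the open set R_q(z). -/
/-!
Put `a = q⁻¹` and `s(t) = t·q^{-z}/(1 - q)`. Because `q^{-(n+z)}·q^{n+z} = 1`, the exponent
`-t·q^{-(n+z)}·[n+z]_q` equals `t/(1 - q) - aⁿ·s(t)`, so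
`F_q^{+,ν}(t,z) = t^ν·q^{-νz}·e^{t/(1-q)}·∑ a^{νn}·exp(-aⁿ·s(t))`.
The condition on `arg t` says exactly that `Re s(t) > 0`, because `t·q^{-z}` has argument
`arg t - Im z·log q`. On every half-plane `Re s > c > 0` the terms are bounded by
`a^{νn}·exp(-c·aⁿ) ≤ (ν+1)!·c^{-(ν+1)}·a^{-n}`, a summable majorant, so the series converges
absolutely and, by Weierstrass' theorem, is holomorphic in `s` on `Re s > 0`.
-/

open Complex MeasureTheory

/-- `q^w := exp(w · log q)` with the real logarithm of `q`. -/
noncomputable def qpow (q : ℝ) (w : ℂ) : ℂ := Complex.exp (w * Real.log q)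

/-- `[w]_q := (1 - q^w)/(1 - q)`. -/
noncomputable def qbr (q : ℝ) (w : ℂ) : ℂ := (1 - qpow q w) / (1 - (q : ℂ))

/-- the `n`-th term of the series defining `F_q^{+,ν}(t,z)`. -/
noncomputable def FpTerm (q : ℝ) (ν : ℕ) (t z : ℂ) (n : ℕ) : ℂ :=
  qpow q (-(ν : ℂ) * ((n : ℂ) + z)) *
    Complex.exp (-t * qpow q (-((n : ℂ) + z)) * qbr q ((n : ℂ) + z))

/-- `F_q^{+,ν}(t,z)`. -/
noncomputable def Fp (q : ℝ) (ν : ℕ) (t z : ℂ) : ℂ := t ^ ν * ∑' n : ℕ, FpTerm q ν t z n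

theorem summable_pow_mul_exp_neg_mul_pow {a c : ℝ} (ha : 1 < a) (hc : 0 < c) (k : ℕ) :
    Summable fun n : ℕ => a ^ (k * n) * Real.exp (-(a ^ n * c)) := by
  have ha0 : 0 < a := zero_lt_one.trans ha
  have hexp : ∀ x : ℝ, 0 < x → Real.exp (-x) ≤ (k + 1).factorial / x ^ (k + 1) := fun x hx => by
    rw [Real.exp_neg, ← inv_div]
    exact inv_anti₀ (by positivity) (Real.pow_div_factorial_le_exp _ hx.le _)
  refine .of_nonneg_of_le (fun n => by positivity) (fun n => ?_)
    ((summable_geometric_of_lt_one (inv_nonneg.2 ha0.le) (inv_lt_one_of_one_lt₀ ha)).mul_left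
      ((k + 1).factorial / c ^ (k + 1)))
  calc a ^ (k * n) * Real.exp (-(a ^ n * c))
      ≤ a ^ (k * n) * ((k + 1).factorial / (a ^ n * c) ^ (k + 1)) := by
        gcongr; exact hexp _ (by positivity)
    _ = (k + 1).factorial / c ^ (k + 1) * a⁻¹ ^ n := by
        rw [mul_pow, ← pow_mul, inv_pow, show n * (k + 1) = k * n + n by ring, pow_add]
        field_simp

theorem norm_pow_mul_cexp_neg_pow_mul {a : ℝ} (ha : 0 < a) (k n : ℕ) (s : ℂ) :
    ‖(a : ℂ) ^ (k * n) * cexp (-(a : ℂ) ^ n * s)‖ = a ^ (k * n) * Real.exp (-(a ^ n * s.re)) := by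
  rw [norm_mul, norm_pow, Complex.norm_exp, Complex.norm_of_nonneg ha.le, ← ofReal_pow,
    ← ofReal_neg, re_ofReal_mul, neg_mul]

theorem differentiableOn_tsum_pow_mul_cexp_neg_pow_mul {a : ℝ} (ha : 1 < a) (k : ℕ) :
    DifferentiableOn ℂ (fun s => ∑' n : ℕ, (a : ℂ) ^ (k * n) * cexp (-(a : ℂ) ^ n * s))
      {s | 0 < s.re} := by
  intro s₀ hs₀
  have hV : IsOpen {s : ℂ | s₀.re / 2 < s.re} := isOpen_lt continuous_const continuous_re
  have hdiff : DifferentiableOn ℂ (fun s => ∑' n : ℕ, (a : ℂ) ^ (k * n) * cexp (-(a : ℂ) ^ n * s))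
      {s | s₀.re / 2 < s.re} := by
    refine differentiableOn_tsum_of_summable_norm
      (summable_pow_mul_exp_neg_mul_pow ha (half_pos hs₀) k) (fun n => by fun_prop) hV
      (fun n s hs => ?_)
    rw [norm_pow_mul_cexp_neg_pow_mul (zero_lt_one.trans ha)]
    gcongr
    exact hs.le
  have hs₀V : s₀ ∈ {s : ℂ | s₀.re / 2 < s.re} := Set.mem_ofPred.mpr (half_lt_self hs₀)
  exact (hdiff.differentiableAt (hV.mem_nhds hs₀V)).differentiableWithinAt

theorem qpow_add (q : ℝ) (w w' : ℂ) : qpow q (w + w') = qpow q w * qpow q w' := by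
  rw [qpow, qpow, qpow, add_mul, Complex.exp_add]

theorem qpow_neg_mul_self (q : ℝ) (w : ℂ) : qpow q (-w) * qpow q w = 1 := by
  rw [← qpow_add, neg_add_cancel, qpow, zero_mul, Complex.exp_zero]

theorem qpow_neg_natCast {q : ℝ} (hq : 0 < q) (n : ℕ) : qpow q (-n) = ((q⁻¹ : ℝ) : ℂ) ^ n := by
  rw [qpow, ← Real.exp_log (inv_pos.2 hq), Real.log_inv, Complex.ofReal_exp, ← Complex.exp_nat_mul]
  push_cast
  ring_nf

theorem re_mul_qpow_neg_div_pos {q : ℝ} (hq1 : q < 1) {t z : ℂ} (ht : t ≠ 0)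
    (harg : |t.arg - z.im * Real.log q| < Real.pi / 2) :
    0 < (t * qpow q (-z) / (1 - q)).re := by
  have hpolar : t * qpow q (-z) = ((‖t‖ * Real.exp (-(z.re * Real.log q)) : ℝ) : ℂ) *
      cexp (((t.arg - z.im * Real.log q : ℝ) : ℂ) * I) := by
    conv_lhs => rw [← norm_mul_exp_arg_mul_I t]
    rw [qpow, Complex.ofReal_mul, Complex.ofReal_exp, mul_assoc, mul_assoc, ← Complex.exp_add,
      ← Complex.exp_add]
    congr 2
    apply Complex.ext <;> simp [sub_mul, ← sub_eq_add_neg]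
  obtain ⟨h₁, h₂⟩ := abs_lt.mp harg
  rw [show (1 : ℂ) - q = ((1 - q : ℝ) : ℂ) by push_cast; rfl, div_ofReal_re, hpolar,
    re_ofReal_mul, exp_ofReal_mul_I_re]
  exact div_pos (mul_pos (mul_pos (norm_pos_iff.mpr ht) (Real.exp_pos _))
    (Real.cos_pos_of_mem_Ioo ⟨h₁, h₂⟩)) (sub_pos.2 hq1)

theorem FpTerm_eq {q : ℝ} (hq0 : 0 < q) (hq1 : q ≠ 1) (ν : ℕ) (t z : ℂ) (n : ℕ) :
    FpTerm q ν t z n = qpow q (-(ν * z)) * cexp (t / (1 - q)) *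
      (((q⁻¹ : ℝ) : ℂ) ^ (ν * n) * cexp (-((q⁻¹ : ℝ) : ℂ) ^ n * (t * qpow q (-z) / (1 - q)))) := by
  have h1q : (1 : ℂ) - q ≠ 0 := sub_ne_zero.mpr (by exact_mod_cast hq1.symm)
  have hν : qpow q (-ν * (n + z)) = ((q⁻¹ : ℝ) : ℂ) ^ (ν * n) * qpow q (-(ν * z)) := by
    rw [← qpow_neg_natCast hq0, ← qpow_add]; push_cast; ring_nf
  have hn : qpow q (-(n + z)) = ((q⁻¹ : ℝ) : ℂ) ^ n * qpow q (-z) := by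
    rw [← qpow_neg_natCast hq0, ← qpow_add, neg_add]
  have hinv := qpow_neg_mul_self q (n + z)
  rw [hn] at hinv
  have hexp : -t * qpow q (-(n + z)) * qbr q (n + z) =
      t / (1 - q) + -((q⁻¹ : ℝ) : ℂ) ^ n * (t * qpow q (-z) / (1 - q)) := by
    rw [qbr, hn]
    generalize ((q⁻¹ : ℝ) : ℂ) ^ n = a at hinv ⊢
    field_simp
    linear_combination t * hinv
  rw [FpTerm, hν, hexp, Complex.exp_add]
  ring

theorem Fp_eq {q : ℝ} (hq0 : 0 < q) (hq1 : q ≠ 1) (ν : ℕ) (t z : ℂ) :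
    Fp q ν t z = t ^ ν * (qpow q (-(ν * z)) * cexp (t / (1 - q)) *
      ∑' n : ℕ, ((q⁻¹ : ℝ) : ℂ) ^ (ν * n) *
        cexp (-((q⁻¹ : ℝ) : ℂ) ^ n * (t * qpow q (-z) / (1 - q)))) := by
  simp_rw [Fp, FpTerm_eq hq0 hq1, tsum_mul_left]

theorem stmt0_general (q : ℝ) (hq0 : 0 < q) (hq1 : q < 1) (ν : ℕ)
    (z : ℂ) :
    (∀ t : ℂ, (t ≠ 0 ∧ |t.arg - z.im * Real.log q| < Real.pi / 2) →
      Summable (fun n : ℕ => ‖FpTerm q ν t z n‖)) ∧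
    DifferentiableOn ℂ (fun t : ℂ => Fp q ν t z)
      {t : ℂ | t ≠ 0 ∧ |t.arg - z.im * Real.log q| < Real.pi / 2} := by
  have ha : 1 < q⁻¹ := (one_lt_inv₀ hq0).2 hq1
  refine ⟨fun t ht => ?_, ?_⟩
  · simp_rw [FpTerm_eq hq0 hq1.ne, norm_mul _ ((_ : ℂ) ^ (ν * _) * _),
      norm_pow_mul_cexp_neg_pow_mul (inv_pos.2 hq0)]
    exact (summable_pow_mul_exp_neg_mul_pow ha (re_mul_qpow_neg_div_pos hq1 ht.1 ht.2) ν).mul_left _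
  · have hseries := (differentiableOn_tsum_pow_mul_cexp_neg_pow_mul ha ν).comp
      (s := {t : ℂ | t ≠ 0 ∧ |t.arg - z.im * Real.log q| < Real.pi / 2})
      (f := fun t => t * qpow q (-z) / (1 - q)) (by fun_prop)
      fun t ht => re_mul_qpow_neg_div_pos hq1 ht.1 ht.2
    refine DifferentiableOn.congr ?_ fun t _ => Fp_eq hq0 hq1.ne ν t z
    exact (differentiableOn_pow ν).mul (DifferentiableOn.mul (by fun_prop) hseries)

theorem stmt0 (q : ℝ) (hq0 : 0 < q) (hq1 : q < 1) (ν : ℕ) (hν : 0 < ν)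
    (z : ℂ) (hz : |z.im| < Real.pi / (2 * |Real.log q|)) :
    (∀ t : ℂ, (t ≠ 0 ∧ |t.arg - z.im * Real.log q| < Real.pi / 2) →
      Summable (fun n : ℕ => ‖FpTerm q ν t z n‖)) ∧
    DifferentiableOn ℂ (fun t : ℂ => Fp q ν t z)
      {t : ℂ | t ≠ 0 ∧ |t.arg - z.im * Real.log q| < Real.pi / 2} :=
  stmt0_general q hq0 hq1 ν z
end

section
/- Let 0 < q < 1, let ν be a positive integer, let z = x + iy ∈ D_q (x, y real) and set β_y := cos(y·log q). Then for every real t > 0, |F_q^{+,ν}(t,z)| ≤ exp(−t·(β_y·q^{−x} − 1)/(1 − q)) · ( t^ν·q^{−νx} + (ν·e^{−1}/β_y)^ν / (1 − exp(−t·β_y·q^{−x})) ). -/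
open Complex

/-!
Write `a = q^{-Re z}` and `β = cos (Im z · log q)`. Since `q^{-w} [w]_q = (q^{-w} - 1)/(1 - q)`, the
`n`-th term of `t^ν F` has norm `(t c)^ν exp (-t (β c - 1)/(1 - q))` with `c = a q^{-n}`. The term
`n = 0` is the first summand of the bound. For `n = m + 1`, Bernoulli's inequality gives
`(c - a)/(1 - q) ≥ c + a m`, so the term is at most `exp (-t (β a - 1)/(1 - q))` times
`(t c)^ν e^{-tβc} · e^{-tβa m}`; the elementary bound `s^ν e^{-s} ≤ (ν/e)^ν` at `s = tβc` and the
geometric series in `e^{-tβa} < 1` give the second summand. The hypothesis on `Im z` is exactly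
`|Im z · log q| < π/2`, i.e. `β > 0`.
-/

namespace Real

theorem pow_mul_exp_neg_le (ν : ℕ) {s : ℝ} (hs : 0 ≤ s) :
    s ^ ν * exp (-s) ≤ (ν * exp (-1)) ^ ν := by
  rcases ν.eq_zero_or_pos with rfl | hν
  · simpa using exp_le_one_iff.2 (neg_nonpos.2 hs)
  have hν' : (0 : ℝ) < ν := Nat.cast_pos.2 hν
  calc s ^ ν * exp (-s) = (ν * (s / ν * exp (-(s / ν)))) ^ ν := by
        rw [mul_pow, mul_pow, ← exp_nat_mul, mul_neg, mul_div_cancel₀ _ hν'.ne', div_pow]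
        field_simp
    _ ≤ (ν * exp (-1)) ^ ν := by
        gcongr
        exact mul_exp_neg_le_exp_neg_one _

theorem cos_mul_pos_of_abs_lt {y L : ℝ} (h : |y| < π / (2 * |L|)) : 0 < cos (y * L) := by
  have hL : 0 < |L| := by
    by_contra! hL
    have : π / (2 * |L|) ≤ 0 := div_nonpos_of_nonneg_of_nonpos pi_pos.le (by linarith)
    linarith [abs_nonneg y]
  have hyL : |y * L| < π / 2 := by
    rwa [abs_mul, ← lt_div_iff₀ hL, div_div]
  exact cos_pos_of_mem_Ioo ⟨by linarith [neg_abs_le (y * L)], (le_abs_self _).trans_lt hyL⟩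

end Real

theorem one_add_mul_one_sub_le_inv_pow {q : ℝ} (hq0 : 0 < q) (hq1 : q < 1) (m : ℕ) :
    1 + m * (1 - q) ≤ q⁻¹ ^ m := by
  have hp : 1 - q ≤ q⁻¹ - 1 := by
    have : q⁻¹ - 1 - (1 - q) = (1 - q) ^ 2 / q := by field_simp
    linarith [div_nonneg (sq_nonneg (1 - q)) hq0.le]
  calc 1 + m * (1 - q) ≤ 1 + m * (q⁻¹ - 1) := by gcongr
    _ ≤ (1 + (q⁻¹ - 1)) ^ m := one_add_mul_le_pow (by linarith [inv_pos.2 hq0]) m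
    _ = q⁻¹ ^ m := by ring

section Majorant

open Real

variable {q β t a : ℝ} (ν : ℕ)

theorem tail_term_le (hq1 : q < 1) (hβ : 0 < β) (ht : 0 ≤ t) {c : ℝ} (hc : 0 ≤ c) {m : ℕ}
    (hcm : c + a * m ≤ (c - a) / (1 - q)) :
    (t * c) ^ ν * rexp (-t * (β * c - 1) / (1 - q)) ≤
      rexp (-t * (β * a - 1) / (1 - q)) * (ν * rexp (-1) / β) ^ ν * rexp (-t * β * a) ^ m := by
  have hq : 1 - q ≠ 0 := by linarith
  have hsplit : rexp (-t * (β * c - 1) / (1 - q)) =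
      rexp (-t * (β * a - 1) / (1 - q)) * rexp (-(t * β * ((c - a) / (1 - q)))) := by
    rw [← Real.exp_add]; congr 1; field_simp; ring
  have hdecay :
      rexp (-(t * β * ((c - a) / (1 - q)))) ≤ rexp (-(t * β * c)) * rexp (-t * β * a) ^ m := by
    rw [← Real.exp_nat_mul, ← Real.exp_add, Real.exp_le_exp]
    nlinarith [mul_le_mul_of_nonneg_left hcm (mul_nonneg ht hβ.le)]
  have hpeak : (t * c) ^ ν * rexp (-(t * β * c)) ≤ (ν * rexp (-1) / β) ^ ν := by
    rw [div_pow, le_div_iff₀ (pow_pos hβ ν), mul_right_comm, ← mul_pow,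
      show t * c * β = t * β * c by ring]
    exact pow_mul_exp_neg_le ν (by positivity)
  calc (t * c) ^ ν * rexp (-t * (β * c - 1) / (1 - q))
      ≤ (t * c) ^ ν * (rexp (-t * (β * a - 1) / (1 - q)) *
          (rexp (-(t * β * c)) * rexp (-t * β * a) ^ m)) := by
        rw [hsplit]; gcongr
    _ = rexp (-t * (β * a - 1) / (1 - q)) * ((t * c) ^ ν * rexp (-(t * β * c))) *
          rexp (-t * β * a) ^ m := by ring
    _ ≤ _ := by gcongr

noncomputable def qMajorant (q β t a : ℝ) (ν n : ℕ) : ℝ :=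
  (t * (a * q⁻¹ ^ n)) ^ ν * rexp (-t * (β * (a * q⁻¹ ^ n) - 1) / (1 - q))

theorem add_mul_le_inv_pow_sub_div (hq0 : 0 < q) (hq1 : q < 1) (ha : 0 ≤ a) (m : ℕ) :
    a * q⁻¹ ^ (m + 1) + a * m ≤ (a * q⁻¹ ^ (m + 1) - a) / (1 - q) := by
  have hshift : q * q⁻¹ ^ (m + 1) = q⁻¹ ^ m := by rw [pow_succ]; field_simp
  rw [le_div_iff₀ (by linarith)]
  nlinarith [mul_le_mul_of_nonneg_left (one_add_mul_one_sub_le_inv_pow hq0 hq1 m) ha]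

theorem summable_qMajorant_and_tsum_le (hq0 : 0 < q) (hq1 : q < 1) (hβ : 0 < β) (ht : 0 < t)
    (ha : 0 < a) :
    Summable (qMajorant q β t a ν) ∧
      ∑' n, qMajorant q β t a ν n ≤ rexp (-t * (β * a - 1) / (1 - q)) *
        ((t * a) ^ ν + (ν * rexp (-1) / β) ^ ν / (1 - rexp (-t * β * a))) := by
  set r := rexp (-t * β * a)
  have hr1 : r < 1 := Real.exp_lt_one_iff.2 (by nlinarith [mul_pos ht hβ])
  have hgeom := (hasSum_geometric_of_lt_one (exp_nonneg _) hr1).mul_left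
    (rexp (-t * (β * a - 1) / (1 - q)) * (ν * rexp (-1) / β) ^ ν)
  have htail : ∀ m : ℕ, qMajorant q β t a ν (m + 1) ≤
      rexp (-t * (β * a - 1) / (1 - q)) * (ν * rexp (-1) / β) ^ ν * r ^ m := fun m =>
    tail_term_le ν hq1 hβ ht.le (by positivity) (add_mul_le_inv_pow_sub_div hq0 hq1 ha.le m)
  have hsum_tail : Summable fun m => qMajorant q β t a ν (m + 1) :=
    hgeom.summable.of_nonneg_of_le (fun m => by unfold qMajorant; positivity) htail
  have hsum := (summable_nat_add_iff 1).mp hsum_tail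
  refine ⟨hsum, ?_⟩
  calc ∑' n, qMajorant q β t a ν n
      = qMajorant q β t a ν 0 + ∑' m, qMajorant q β t a ν (m + 1) := hsum.tsum_eq_zero_add
    _ ≤ qMajorant q β t a ν 0 +
        rexp (-t * (β * a - 1) / (1 - q)) * (ν * rexp (-1) / β) ^ ν * (1 - r)⁻¹ := by
        gcongr
        exact (hsum_tail.tsum_le_tsum htail hgeom.summable).trans_eq hgeom.tsum_eq
    _ = _ := by simp only [qMajorant, pow_zero, mul_one]; ring

end Majorant

section QPow

variable {q : ℝ}

theorem norm_qpow (hq : 0 < q) (w : ℂ) : ‖qpow q w‖ = q ^ w.re := by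
  rw [qpow, norm_exp, Real.rpow_def_of_pos hq, mul_comm (Real.log q)]
  simp

theorem re_qpow (hq : 0 < q) (w : ℂ) :
    (qpow q w).re = q ^ w.re * Real.cos (w.im * Real.log q) := by
  rw [qpow, exp_re, Real.rpow_def_of_pos hq, mul_comm (Real.log q)]
  simp

theorem qpow_neg_mul_qbr (w : ℂ) :
    qpow q (-w) * qbr q w = (qpow q (-w) - 1) / (1 - q) := by
  have hinv : qpow q (-w) * qpow q w = 1 := by
    rw [qpow, qpow, ← Complex.exp_add, neg_mul, neg_add_cancel, Complex.exp_zero]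
  rw [qbr, mul_div_assoc', mul_sub, mul_one, hinv]

theorem norm_FpTerm (hq0 : 0 < q) (ν : ℕ) (t : ℝ) (z : ℂ) (n : ℕ) :
    ‖FpTerm q ν t z n‖ = (q ^ (-(n + z.re))) ^ ν *
      Real.exp (-t * (Real.cos (z.im * Real.log q) * q ^ (-(n + z.re)) - 1) / (1 - q)) := by
  have hν : qpow q (-(ν : ℂ) * (n + z)) = qpow q (-(n + z)) ^ ν := by
    rw [qpow, qpow, ← Complex.exp_nat_mul]; ring_nf
  have harg : -(t : ℂ) * qpow q (-(n + z)) * qbr q (n + z) =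
      ((-t / (1 - q) : ℝ) : ℂ) * (qpow q (-(n + z)) - 1) := by
    rw [mul_assoc, qpow_neg_mul_qbr]; push_cast; ring
  rw [FpTerm, hν, harg, norm_mul, norm_pow, norm_qpow hq0, norm_exp, re_ofReal_mul, sub_re,
    re_qpow hq0]
  simp only [neg_re, neg_im, add_re, add_im, natCast_re, natCast_im, zero_add, neg_mul,
    Real.cos_neg, one_re]
  ring_nf

theorem norm_mul_FpTerm_eq_qMajorant (hq0 : 0 < q) (ν : ℕ) {t : ℝ} (ht : 0 ≤ t)
    (z : ℂ) (n : ℕ) :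
    ‖(t : ℂ) ^ ν * FpTerm q ν t z n‖ =
      qMajorant q (Real.cos (z.im * Real.log q)) t (q ^ (-z.re)) ν n := by
  have hsplit : q ^ (-(n + z.re)) = q ^ (-z.re) * q⁻¹ ^ n := by
    rw [neg_add, Real.rpow_add hq0, Real.rpow_neg hq0.le (n : ℝ), Real.rpow_natCast, inv_pow,
      mul_comm]
  rw [norm_mul, norm_pow, norm_real, Real.norm_of_nonneg ht, norm_FpTerm hq0, hsplit,
    qMajorant]
  ring

end QPow

theorem stmt4_general (q : ℝ) (hq0 : 0 < q) (hq1 : q < 1) (ν : ℕ)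
    (z : ℂ) (hz : |z.im| < Real.pi / (2 * |Real.log q|)) (t : ℝ) (ht : 0 < t) :
    ‖Fp q ν (t : ℂ) z‖ ≤
      Real.exp (-t * (Real.cos (z.im * Real.log q) * q ^ (-z.re) - 1) / (1 - q)) *
        (t ^ ν * q ^ (-(ν : ℝ) * z.re) +
          ((ν : ℝ) * Real.exp (-1) / Real.cos (z.im * Real.log q)) ^ ν /
            (1 - Real.exp (-t * Real.cos (z.im * Real.log q) * q ^ (-z.re)))) := by
  have hnorm := norm_mul_FpTerm_eq_qMajorant hq0 ν ht.le z
  obtain ⟨hsum, hle⟩ := summable_qMajorant_and_tsum_le ν hq0 hq1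
    (Real.cos_mul_pos_of_abs_lt hz) ht (Real.rpow_pos_of_pos hq0 (-z.re))
  have hpow : (t * q ^ (-z.re)) ^ ν = t ^ ν * q ^ (-(ν : ℝ) * z.re) := by
    rw [mul_pow, ← Real.rpow_natCast (q ^ _), ← Real.rpow_mul hq0.le, neg_mul_comm, mul_comm z.re]
  calc ‖Fp q ν t z‖ = ‖∑' n, (t : ℂ) ^ ν * FpTerm q ν t z n‖ := by rw [Fp, tsum_mul_left]
    _ ≤ ∑' n, ‖(t : ℂ) ^ ν * FpTerm q ν t z n‖ :=
        norm_tsum_le_tsum_norm (hsum.congr fun n => (hnorm n).symm)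
    _ ≤ _ := by simpa only [hnorm, hpow] using hle

theorem stmt4 (q : ℝ) (hq0 : 0 < q) (hq1 : q < 1) (ν : ℕ) (hν : 0 < ν)
    (z : ℂ) (hz : |z.im| < Real.pi / (2 * |Real.log q|)) (t : ℝ) (ht : 0 < t) :
    ‖Fp q ν (t : ℂ) z‖ ≤
      Real.exp (-t * (Real.cos (z.im * Real.log q) * q ^ (-z.re) - 1) / (1 - q)) *
        (t ^ ν * q ^ (-(ν : ℝ) * z.re) +
          ((ν : ℝ) * Real.exp (-1) / Real.cos (z.im * Real.log q)) ^ ν /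
            (1 - Real.exp (-t * Real.cos (z.im * Real.log q) * q ^ (-z.re)))) :=
  stmt4_general q hq0 hq1 ν z hz t ht
end

section
/- Let 0 < q < 1, let ν be a positive integer, let z ∈ D_q, let t > 0 be real and let ξ ∈ ℝ. Then the integral over η ∈ ℝ of q^{−ν(η+z)}·exp(−t·q^{−(η+z)}·[η+z]_q)·e^{−2πi·η·ξ} converges absolutely and equals −(1/log q)·e^{t/(1−q)}·e^{2πi·ξ·z}·((1−q)/t)^{ν+δξ}·Γ(ν+δξ), where δ := 2πi/log q and ((1−q)/t)^{ν+δξ} := exp((ν+δξ)·ln((1−q)/t)) with the real logarithm ln of the positive number (1−q)/t. -/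
/-!
With `b = -log q`, `s = ν + δξ` and `w = log (t / (1 - q)) - z log q`, the integrand equals
`exp (t / (1 - q)) q^(-νz) · e^(s b η) exp (-e^(w + b η))`. The substitution `x = e^u` turns
`∫ e^(s u) exp (-e^(w + u)) du` into the Gamma integral `∫₀^∞ x^(s-1) e^(-c x) dx` with
`c = e^w`. The condition `z ∈ D_q` says exactly `|Im w| < π/2`, i.e. `Re c > 0`, and for such `c`
the Gamma integral is `c^(-s) Γ(s)` by analytic continuation from the positive reals.
-/

open Complex MeasureTheory Real

open Set Filter Topology

lemma norm_cpow_mul_cexp_neg_mul {s c : ℂ} {x : ℝ} (hx : 0 < x) :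
    ‖(x : ℂ) ^ (s - 1) * cexp (-(c * x))‖ = x ^ (s.re - 1) * Real.exp (-(c.re * x)) := by
  rw [norm_mul, norm_cpow_eq_rpow_re_of_pos hx, norm_exp]
  simp

lemma integrableOn_cpow_mul_cexp_neg_mul_Ioi {s c : ℂ} (hs : 0 < s.re) (hc : 0 < c.re) :
    IntegrableOn (fun x : ℝ => (x : ℂ) ^ (s - 1) * cexp (-(c * x))) (Ioi 0) := by
  refine Integrable.mono'
    (integrableOn_rpow_mul_exp_neg_mul_rpow (by linarith : -1 < s.re - 1) one_pos hc)
    (by fun_prop) ((ae_restrict_iff' measurableSet_Ioi).mpr (ae_of_all _ fun x hx => ?_))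
  rw [norm_cpow_mul_cexp_neg_mul hx, rpow_one, neg_mul]

lemma differentiableOn_integral_cpow_mul_cexp_neg_mul {s : ℂ} (hs : 0 < s.re) :
    DifferentiableOn ℂ (fun c : ℂ => ∫ x : ℝ in Ioi 0, (x : ℂ) ^ (s - 1) * cexp (-(c * x)))
      {c | 0 < c.re} := by
  intro c₀ (hc₀ : 0 < c₀.re)
  have hball : ∀ c ∈ Metric.ball c₀ (c₀.re / 2), c₀.re / 2 < c.re := fun c hc => by
    have := (abs_re_le_norm (c - c₀)).trans_lt (mem_ball_iff_norm.mp hc)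
    rw [sub_re] at this
    linarith [neg_abs_le (c.re - c₀.re)]
  have hnhds := Metric.ball_mem_nhds c₀ (half_pos hc₀)
  refine (hasDerivAt_integral_of_dominated_loc_of_deriv_le hnhds (μ := volume.restrict (Ioi 0))
    (F := fun c (x : ℝ) => (x : ℂ) ^ (s - 1) * cexp (-(c * x)))
    (F' := fun c (x : ℝ) => -((x : ℂ) ^ (s + 1 - 1) * cexp (-(c * x))))
    (bound := fun x : ℝ => ‖(x : ℂ) ^ (s + 1 - 1) * cexp (-(c₀ / 2 * x))‖) ?_
    (integrableOn_cpow_mul_cexp_neg_mul_Ioi hs hc₀) (by fun_prop) ?_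
    (integrableOn_cpow_mul_cexp_neg_mul_Ioi (by simp; linarith) (by simpa using hc₀)).norm
    ?_).2.differentiableAt.differentiableWithinAt
  · filter_upwards [hnhds] with c hc
    exact (integrableOn_cpow_mul_cexp_neg_mul_Ioi hs (by linarith [hball c hc])).1
  · refine (ae_restrict_iff' measurableSet_Ioi).mpr (ae_of_all _ fun x (hx : 0 < x) c hc => ?_)
    rw [norm_neg, norm_cpow_mul_cexp_neg_mul hx, norm_cpow_mul_cexp_neg_mul hx]
    gcongr x ^ _ * Real.exp (-(?_ * x))
    simpa using (hball c hc).le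
  · refine (ae_restrict_iff' measurableSet_Ioi).mpr (ae_of_all _ fun x (hx : 0 < x) c _ => ?_)
    have hpow : (x : ℂ) ^ (s + 1 - 1) = (x : ℂ) ^ (s - 1) * x := by
      rw [add_sub_right_comm, cpow_add _ _ (ofReal_ne_zero.mpr hx.ne'), cpow_one]
    refine ((((hasDerivAt_id c).mul_const (x : ℂ)).neg.cexp).const_mul
      ((x : ℂ) ^ (s - 1))).congr_deriv ?_
    rw [hpow]
    simp only [id_eq, one_mul, Pi.neg_apply]
    ring

theorem integral_cpow_mul_exp_neg_mul_Ioi_of_re_pos {s c : ℂ} (hs : 0 < s.re) (hc : 0 < c.re) :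
    ∫ x : ℝ in Ioi 0, (x : ℂ) ^ (s - 1) * cexp (-(c * x)) = (1 / c) ^ s * Gamma s := by
  have hU : IsOpen {c : ℂ | 0 < c.re} := isOpen_lt continuous_const continuous_re
  have hrhs : DifferentiableOn ℂ (fun c : ℂ => (1 / c) ^ s * Gamma s) {c | 0 < c.re} := by
    intro c (hc : 0 < c.re)
    have hc0 : c ≠ 0 := fun h => by simp [h] at hc
    have hslit : 1 / c ∈ slitPlane := Or.inl <| by
      rw [one_div, inv_re]
      exact div_pos hc (normSq_pos.mpr hc0)
    exact ((((differentiableAt_const 1).div differentiableAt_id hc0).cpow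
      (differentiableAt_const s) hslit).mul_const _).differentiableWithinAt
  have hlhs := (differentiableOn_integral_cpow_mul_cexp_neg_mul hs).analyticOnNhd hU
  refine hlhs.eqOn_of_preconnected_of_frequently_eq (hrhs.analyticOnNhd hU)
    (convex_halfSpace_re_gt 0).isPreconnected (z₀ := 1) (by simp) ?_ hc
  have hreal : ∃ᶠ r : ℝ in 𝓝[≠] 1,
      ∫ x : ℝ in Ioi 0, (x : ℂ) ^ (s - 1) * cexp (-(r * x)) = (1 / (r : ℂ)) ^ s * Gamma s :=
    (eventually_nhdsWithin_of_eventually_nhds (lt_mem_nhds one_pos)).frequently.mono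
      fun r hr => integral_cpow_mul_exp_neg_mul_Ioi hs hr
  exact (continuous_ofReal.continuousWithinAt.tendsto_nhdsWithin
    fun r hr => by simpa using hr).frequently hreal

theorem integrable_and_integral_cexp_mul_mul_cexp_neg_cexp_add {s w : ℂ} (hs : 0 < s.re)
    (hw : |w.im| < π / 2) :
    Integrable (fun u : ℝ => cexp (s * u) * cexp (-cexp (w + u))) ∧
      ∫ u : ℝ, cexp (s * u) * cexp (-cexp (w + u)) = cexp (-(s * w)) * Gamma s := by
  obtain ⟨hw₁, hw₂⟩ := abs_lt.mp hw
  have hc : 0 < (cexp w).re := by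
    rw [exp_re]
    exact mul_pos (Real.exp_pos _) (Real.cos_pos_of_mem_Ioo ⟨hw₁, hw₂⟩)
  have hsubst : ∀ u : ℝ,
      |Real.exp u| • ((Real.exp u : ℂ) ^ (s - 1) * cexp (-(cexp w * Real.exp u))) =
        cexp (s * u) * cexp (-cexp (w + u)) := fun u => by
    have hpow : ((Real.exp u : ℝ) : ℂ) ^ (s - 1) = cexp ((s - 1) * u) := by
      rw [cpow_def_of_ne_zero (ofReal_ne_zero.mpr (Real.exp_pos u).ne'),
        ← ofReal_log (Real.exp_pos u).le, Real.log_exp, mul_comm]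
    rw [abs_of_pos (Real.exp_pos u), real_smul, hpow, ofReal_exp, Complex.exp_add w, ← mul_assoc,
      ← Complex.exp_add]
    congr 2
    ring
  have hderiv : ∀ u ∈ univ, HasDerivWithinAt Real.exp (Real.exp u) univ u :=
    fun u _ => (Real.hasDerivAt_exp u).hasDerivWithinAt
  have himage : Real.exp '' univ = Ioi 0 := by rw [image_univ, Real.range_exp]
  have hint := integrableOn_cpow_mul_cexp_neg_mul_Ioi hs hc
  rw [← himage, integrableOn_image_iff_integrableOn_abs_deriv_smul MeasurableSet.univ hderiv
    Real.exp_injective.injOn, integrableOn_univ] at hint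
  have hval := integral_cpow_mul_exp_neg_mul_Ioi_of_re_pos hs hc
  rw [← himage, integral_image_eq_integral_abs_deriv_smul MeasurableSet.univ hderiv
    Real.exp_injective.injOn, setIntegral_univ] at hval
  simp only [hsubst] at hint hval
  refine ⟨hint, hval.trans ?_⟩
  rw [one_div, ← Complex.exp_neg, cpow_def_of_ne_zero (exp_ne_zero _),
    log_exp (by rw [neg_im]; linarith) (by rw [neg_im]; linarith), neg_mul, mul_comm w s]

lemma qpow_mul_cexp_qbr_eq {q t : ℝ} (hq0 : 0 < q) (hq1 : q < 1) (ht : 0 < t) (ν z : ℂ)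
    (ξ η : ℝ) :
    qpow q (-ν * ((η : ℂ) + z)) *
        cexp (-(t : ℂ) * qpow q (-((η : ℂ) + z)) * qbr q ((η : ℂ) + z)) *
        cexp (-(2 * π * I * η * ξ)) =
      cexp (t / (1 - q)) * cexp (-(ν * Real.log q * z)) *
        (cexp ((ν + 2 * π * I / Real.log q * ξ) * ↑(-Real.log q * η)) *
          cexp (-cexp ((Real.log (t / (1 - q)) - Real.log q * z : ℂ) +
            ↑(-Real.log q * η)))) := by
  have hT : cexp (Real.log (t / (1 - q))) = t / (1 - q) := by
    rw [← ofReal_exp, Real.exp_log (div_pos ht (sub_pos.mpr hq1))]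
    push_cast
    rfl
  have hE : cexp ((Real.log (t / (1 - q)) - Real.log q * z : ℂ) + ↑(-Real.log q * η)) =
      t / (1 - q) * cexp (-(η + z) * Real.log q) := by
    rw [← hT, ← Complex.exp_add]
    congr 1
    push_cast
    ring
  have hexponent : -(t : ℂ) * qpow q (-((η : ℂ) + z)) * qbr q ((η : ℂ) + z) =
      t / (1 - q) +
        -cexp ((Real.log (t / (1 - q)) - Real.log q * z : ℂ) + ↑(-Real.log q * η)) := by
    have hinv : cexp (-(η + z) * Real.log q) * cexp ((η + z) * Real.log q) = 1 := by
      rw [← Complex.exp_add, neg_mul, neg_add_cancel, Complex.exp_zero]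
    rw [hE, qbr, qpow, qpow]
    linear_combination (t / (1 - q) : ℂ) * hinv
  have hphase : cexp (-ν * (η + z) * Real.log q) * cexp (-(2 * π * I * η * ξ)) =
      cexp (-(ν * Real.log q * z)) *
        cexp ((ν + 2 * π * I / Real.log q * ξ) * ↑(-Real.log q * η)) := by
    rw [← Complex.exp_add, ← Complex.exp_add]
    congr 1
    field_simp [ofReal_ne_zero.mpr (Real.log_neg hq0 hq1).ne]
    push_cast
    ring
  rw [hexponent, Complex.exp_add, qpow]
  linear_combination cexp (t / (1 - q)) *
    cexp (-cexp ((Real.log (t / (1 - q)) - Real.log q * z : ℂ) + ↑(-Real.log q * η))) * hphase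

theorem stmt7 (q : ℝ) (hq0 : 0 < q) (hq1 : q < 1) (ν : ℕ) (hν : 0 < ν)
    (z : ℂ) (hz : |z.im| < Real.pi / (2 * |Real.log q|))
    (t : ℝ) (ht : 0 < t) (ξ : ℝ) :
    Integrable (fun η : ℝ =>
      qpow q (-(ν : ℂ) * ((η : ℂ) + z)) *
        Complex.exp (-(t : ℂ) * qpow q (-((η : ℂ) + z)) * qbr q ((η : ℂ) + z)) *
        Complex.exp (-(2 * Real.pi * Complex.I * η * ξ))) ∧
    (∫ η : ℝ,
      qpow q (-(ν : ℂ) * ((η : ℂ) + z)) *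
        Complex.exp (-(t : ℂ) * qpow q (-((η : ℂ) + z)) * qbr q ((η : ℂ) + z)) *
        Complex.exp (-(2 * Real.pi * Complex.I * η * ξ))) =
      -(1 / (Real.log q : ℂ)) * Complex.exp ((t : ℂ) / (1 - (q : ℂ))) *
        Complex.exp (2 * Real.pi * Complex.I * ξ * z) *
        Complex.exp (((ν : ℂ) + (2 * Real.pi * Complex.I / (Real.log q : ℂ)) * ξ) *
          Real.log ((1 - q) / t)) *
        Complex.Gamma ((ν : ℂ) + (2 * Real.pi * Complex.I / (Real.log q : ℂ)) * ξ) := by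
  have hL : Real.log q < 0 := Real.log_neg hq0 hq1
  have hs : 0 < ((ν : ℂ) + (2 * π * I / (Real.log q : ℂ)) * ξ).re := by
    simpa [div_re] using hν
  have hw : |((Real.log (t / (1 - q)) - Real.log q * z : ℂ)).im| < π / 2 := by
    rw [lt_div_iff₀ (mul_pos two_pos (abs_pos.mpr hL.ne))] at hz
    simp only [sub_im, ofReal_im, mul_im, ofReal_re, zero_mul, add_zero, zero_sub, abs_neg,
      abs_mul]
    linarith
  obtain ⟨hint, hval⟩ := integrable_and_integral_cexp_mul_mul_cexp_neg_cexp_add hs hw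
  simp_rw [qpow_mul_cexp_qbr_eq hq0 hq1 ht]
  refine ⟨(hint.comp_mul_left' (neg_ne_zero.mpr hL.ne)).const_mul _, ?_⟩
  rw [integral_const_mul, Measure.integral_comp_mul_left
    (fun u : ℝ => cexp (_ * u) * cexp (-cexp (_ + u))), hval]
  have hlog : Real.log ((1 - q) / t) = -Real.log (t / (1 - q)) := by rw [← Real.log_inv, inv_div]
  have hphase : cexp (-(ν * Real.log q * z)) *
      cexp (-((ν + 2 * π * I / Real.log q * ξ) * (Real.log (t / (1 - q)) - Real.log q * z))) =
      cexp (2 * π * I * ξ * z) *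
        cexp ((ν + 2 * π * I / Real.log q * ξ) * Real.log ((1 - q) / t)) := by
    rw [← Complex.exp_add, ← Complex.exp_add, hlog]
    congr 1
    field_simp [ofReal_ne_zero.mpr hL.ne]
    push_cast
    ring
  rw [abs_of_pos (inv_pos.mpr (neg_pos.mpr hL)), real_smul, ofReal_inv, ofReal_neg]
  linear_combination (-(1 / (Real.log q : ℂ))) * cexp (t / (1 - q)) *
    Gamma ((ν : ℂ) + 2 * π * I / Real.log q * ξ) * hphase
end

section
/- Let 0 < q < 1, let ν be a positive integer, let 0 < a < ∞, let m ∈ ℤ and let l be an integer with l ≥ −ν. Then for every s ∈ ℂ with Re(s) > ν, φ_m^{(ν)}(s;a,q) = Σ_{j=1}^{l+ν+1} (1/(s−ν−mδ)_j)·((−1)^{j−1}/(1−q)^{j−1})·a^{s−ν−mδ+j−1}·e^{a/(1−q)} + (1/(s−ν−mδ)_{l+ν+1})·((−1)^{l+ν+1}/(1−q)^{l+ν+1})·φ_m^{(ν)}(s+l+ν+1;a,q), where (w)_j := w(w+1)⋯(w+j−1) denotes the Pochhammer symbol and a^{w} := exp(w·ln a) with the real logarithm ln a. -/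
open Complex MeasureTheory

/-- `δ := 2πi / log q`. -/
noncomputable def qdelta (q : ℝ) : ℂ := 2 * Real.pi * Complex.I / (Real.log q : ℂ)

/-- `φ_m^{(ν)}(s;a,q) := ∫_0^a t^{s−ν−1−mδ} e^{t/(1−q)} dt`, where
`t^w := exp(w · ln t)` for real `t > 0`. -/
noncomputable def phiQ (q : ℝ) (ν : ℕ) (m : ℤ) (a : ℝ) (s : ℂ) : ℂ :=
  ∫ t in Set.Ioo (0 : ℝ) a,
    Complex.exp ((s - (ν : ℂ) - 1 - (m : ℂ) * qdelta q) * Real.log t) *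
      Complex.exp ((t : ℂ) / (1 - (q : ℂ)))

/-! With `c = 1/(1-q)` and `w = s - ν - mδ` we have `Re w > 0` (as `δ` is purely imaginary) and
`φ_m^{(ν)}(s + k) = ∫_0^a t^{w+k-1} e^{ct} dt`. Integrating `d/dt (t^w e^{ct})` over `(0, a)`,
the boundary value at `0` vanishing because `Re w > 0`, gives
`w ∫_0^a t^{w-1} e^{ct} dt + c ∫_0^a t^w e^{ct} dt = a^w e^{ca}`;
iterating this `l + ν + 1` times accumulates the Pochhammer symbols `(w)_j`. -/

open Set Filter Topology

lemma cexp_mul_log_eq_cpow {t : ℝ} (ht : 0 < t) (y : ℂ) :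
    cexp (y * Real.log t) = (t : ℂ) ^ y := by
  rw [Complex.cpow_def_of_ne_zero (by exact_mod_cast ht.ne'), Complex.ofReal_log ht.le, mul_comm]

lemma integrableOn_cexp_mul_log_mul_cexp {y : ℂ} (hy : -1 < y.re) (c : ℂ) (a : ℝ) :
    IntegrableOn (fun t : ℝ => cexp (y * Real.log t) * cexp (t * c)) (Ioo 0 a) := by
  have hpow : IntegrableOn (fun t : ℝ => (t : ℂ) ^ y) (Ioo 0 a) :=
    (intervalIntegral.intervalIntegrable_cpow' hy).def'.mono_set
      (Ioo_subset_Ioc_self.trans Ioc_subset_uIoc)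
  have hlog : IntegrableOn (fun t : ℝ => cexp (y * Real.log t)) (Ioo 0 a) :=
    hpow.congr_fun (fun t ht => (cexp_mul_log_eq_cpow ht.1 y).symm) measurableSet_Ioo
  exact hlog.mul_continuousOn_of_subset (by fun_prop) measurableSet_Ioo isCompact_Icc
    Ioo_subset_Icc_self

lemma hasDerivAt_cexp_mul_log_mul_cexp {t : ℝ} (ht : 0 < t) (w c : ℂ) :
    HasDerivAt (fun u : ℝ => cexp (w * Real.log u) * cexp (u * c))
      (w * (cexp ((w - 1) * Real.log t) * cexp (t * c)) +
        c * (cexp (w * Real.log t) * cexp (t * c))) t := by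
  have hpow : HasDerivAt (fun u : ℝ => cexp (w * Real.log u))
      (cexp (w * Real.log t) * (w * (t : ℂ)⁻¹)) t := by
    simpa using ((Real.hasDerivAt_log ht.ne').ofReal_comp.const_mul w).cexp
  have hexp : HasDerivAt (fun u : ℝ => cexp (u * c)) (cexp (t * c) * c) t := by
    simpa using ((hasDerivAt_id t).ofReal_comp.mul_const c).cexp
  have hshift : cexp ((w - 1) * Real.log t) = cexp (w * Real.log t) * (t : ℂ)⁻¹ := by
    rw [sub_one_mul, Complex.exp_sub, ← Complex.ofReal_exp, Real.exp_log ht, div_eq_mul_inv]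
  refine (hpow.mul hexp).congr_deriv ?_
  rw [hshift]
  ring

lemma tendsto_cexp_mul_log_nhdsGT_zero {w : ℂ} (hw : 0 < w.re) :
    Tendsto (fun t : ℝ => cexp (w * Real.log t)) (𝓝[>] 0) (𝓝 0) := by
  rw [tendsto_zero_iff_norm_tendsto_zero]
  have hnorm (t : ℝ) : ‖cexp (w * Real.log t)‖ = Real.exp (w.re * Real.log t) := by
    simp [Complex.norm_exp]
  simp only [hnorm]
  exact Real.tendsto_exp_atBot.comp (Real.tendsto_log_nhdsGT_zero.const_mul_atBot hw)

noncomputable def powExpIntegral (c : ℂ) (a : ℝ) (y : ℂ) : ℂ :=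
  ∫ t in Ioo 0 a, cexp (y * Real.log t) * cexp (t * c)

lemma mul_powExpIntegral_sub_one_add {a : ℝ} (ha : 0 < a) {w : ℂ} (hw : 0 < w.re) (c : ℂ) :
    w * powExpIntegral c a (w - 1) + c * powExpIntegral c a w =
      cexp (w * Real.log a) * cexp (a * c) := by
  have hint₀ := integrableOn_cexp_mul_log_mul_cexp (y := w - 1) (by simpa using hw) c a
  have hint₁ := integrableOn_cexp_mul_log_mul_cexp (y := w) (by linarith) c a
  have hlim₀ : Tendsto (fun t : ℝ => cexp (w * Real.log t) * cexp (t * c)) (𝓝[>] 0) (𝓝 0) := by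
    simpa using (tendsto_cexp_mul_log_nhdsGT_zero hw).mul
      ((Continuous.tendsto (by fun_prop) 0).mono_left (nhdsWithin_le_nhds (a := (0 : ℝ))))
  have hlim_a : Tendsto (fun t : ℝ => cexp (w * Real.log t) * cexp (t * c)) (𝓝[<] a)
      (𝓝 (cexp (w * Real.log a) * cexp (a * c))) := by
    have hcont : ContinuousAt (fun t : ℝ => cexp (w * Real.log t) * cexp (t * c)) a := by
      have := Real.continuousAt_log ha.ne'
      fun_prop
    exact hcont.tendsto.mono_left nhdsWithin_le_nhds
  have hFTC := intervalIntegral.integral_eq_sub_of_hasDerivAt_of_tendsto ha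
    (fun t ht => hasDerivAt_cexp_mul_log_mul_cexp ht.1 w c)
    ((intervalIntegrable_iff_integrableOn_Ioo_of_le ha.le).2
      ((hint₀.const_mul w).add (hint₁.const_mul c))) hlim₀ hlim_a
  rw [intervalIntegral.integral_of_le ha.le, integral_Ioc_eq_integral_Ioo,
    integral_add (hint₀.const_mul w) (hint₁.const_mul c), integral_const_mul,
    integral_const_mul, sub_zero] at hFTC
  exact hFTC

lemma ascPochhammer_eval_ne_zero_of_re_pos {w : ℂ} (hw : 0 < w.re) (n : ℕ) :
    (ascPochhammer ℂ n).eval w ≠ 0 := by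
  rw [Ne, ascPochhammer_eval_eq_zero_iff]
  rintro ⟨k, -, hk⟩
  have := congrArg Complex.re hk
  simp only [Complex.natCast_re, Complex.neg_re] at this
  linarith [k.cast_nonneg (α := ℝ)]

lemma powExpIntegral_sub_one_eq_sum {a : ℝ} (ha : 0 < a) {w : ℂ} (hw : 0 < w.re) (c : ℂ)
    (n : ℕ) :
    powExpIntegral c a (w - 1) =
      ∑ j ∈ Finset.Icc 1 n, (-c) ^ (j - 1) / (ascPochhammer ℂ j).eval w *
          cexp ((w + j - 1) * Real.log a) * cexp (a * c) +
        (-c) ^ n / (ascPochhammer ℂ n).eval w * powExpIntegral c a (w + n - 1) := by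
  induction n with
  | zero => simp
  | succ n ih =>
    have hwn : 0 < (w + n).re := by
      rw [add_re, natCast_re]
      positivity
    have hwn₀ : w + n ≠ 0 := fun h => by simp [h] at hwn
    have hrec : powExpIntegral c a (w + n - 1) = (cexp ((w + n) * Real.log a) * cexp (a * c)
        - c * powExpIntegral c a (w + n)) / (w + n) := by
      rw [eq_div_iff hwn₀, ← mul_powExpIntegral_sub_one_add ha hwn c]
      ring
    have hP := ascPochhammer_eval_ne_zero_of_re_pos hw n
    rw [ih, Finset.sum_Icc_succ_top (by omega), ascPochhammer_succ_eval, add_assoc]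
    congr 1
    rw [hrec]
    push_cast
    rw [show w + (n + 1 : ℂ) - 1 = w + n by ring]
    field_simp
    ring

lemma re_intCast_mul_qdelta (q : ℝ) (m : ℤ) : ((m : ℂ) * qdelta q).re = 0 := by
  simp [qdelta]

lemma phiQ_eq_powExpIntegral (q : ℝ) (ν : ℕ) (m : ℤ) (a : ℝ) (s : ℂ) :
    phiQ q ν m a s = powExpIntegral (1 - q)⁻¹ a (s - ν - 1 - m * qdelta q) :=
  rfl

theorem stmt9_general (q : ℝ) (ν : ℕ)
    (a : ℝ) (ha : 0 < a) (m : ℤ) (l : ℤ) (hl : -(ν : ℤ) ≤ l)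
    (s : ℂ) (hs : (ν : ℝ) < s.re) :
    phiQ q ν m a s =
      (∑ j ∈ Finset.Icc 1 (l + ν + 1).toNat,
        (1 / (ascPochhammer ℂ j).eval (s - (ν : ℂ) - (m : ℂ) * qdelta q)) *
          ((-1) ^ (j - 1) / (1 - (q : ℂ)) ^ (j - 1)) *
          Complex.exp ((s - (ν : ℂ) - (m : ℂ) * qdelta q + (j : ℂ) - 1) * Real.log a) *
          Complex.exp ((a : ℂ) / (1 - (q : ℂ)))) +
      (1 / (ascPochhammer ℂ (l + ν + 1).toNat).eval (s - (ν : ℂ) - (m : ℂ) * qdelta q)) *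
        ((-1) ^ (l + ν + 1).toNat / (1 - (q : ℂ)) ^ (l + ν + 1).toNat) *
        phiQ q ν m a (s + (l : ℂ) + (ν : ℂ) + 1) := by
  set w := s - ν - m * qdelta q
  set n := (l + ν + 1).toNat
  have hw : 0 < w.re := by
    simp only [w, sub_re, natCast_re, re_intCast_mul_qdelta]
    linarith
  have hn : (n : ℂ) = l + ν + 1 := by exact_mod_cast Int.toNat_of_nonneg (by omega)
  rw [phiQ_eq_powExpIntegral, phiQ_eq_powExpIntegral,
    show s - ν - 1 - m * qdelta q = w - 1 by ring,
    show s + l + ν + 1 - ν - 1 - m * qdelta q = w + n - 1 by rw [hn]; ring,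
    powExpIntegral_sub_one_eq_sum ha hw]
  simp only [neg_pow (1 - (q : ℂ))⁻¹, inv_pow, div_eq_mul_inv (a : ℂ)]
  congr 1
  · exact Finset.sum_congr rfl fun j _ => by ring
  · ring

theorem stmt9 (q : ℝ) (hq0 : 0 < q) (hq1 : q < 1) (ν : ℕ) (hν : 0 < ν)
    (a : ℝ) (ha : 0 < a) (m : ℤ) (l : ℤ) (hl : -(ν : ℤ) ≤ l)
    (s : ℂ) (hs : (ν : ℝ) < s.re) :
    phiQ q ν m a s =
      (∑ j ∈ Finset.Icc 1 (l + ν + 1).toNat,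
        (1 / (ascPochhammer ℂ j).eval (s - (ν : ℂ) - (m : ℂ) * qdelta q)) *
          ((-1) ^ (j - 1) / (1 - (q : ℂ)) ^ (j - 1)) *
          Complex.exp ((s - (ν : ℂ) - (m : ℂ) * qdelta q + (j : ℂ) - 1) * Real.log a) *
          Complex.exp ((a : ℂ) / (1 - (q : ℂ)))) +
      (1 / (ascPochhammer ℂ (l + ν + 1).toNat).eval (s - (ν : ℂ) - (m : ℂ) * qdelta q)) *
        ((-1) ^ (l + ν + 1).toNat / (1 - (q : ℂ)) ^ (l + ν + 1).toNat) *
        phiQ q ν m a (s + (l : ℂ) + (ν : ℂ) + 1) :=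
  stmt9_general q ν a ha m l hl s hs
end

section
/- Let 0 < q < 1, let ν be a positive integer, let z > 0 be real and let m ≥ 1 be an integer. Then, as the real non-integer variable s tends to 1 − m, the quantity (1−q)^s·Σ_{l=0}^∞ ((s)_l/l!)·q^{z(s−ν+l)}/(1 − q^{s−ν+l}) converges to −B_m^{(ν)}(z;q)/m. (For real non-integer s the denominators 1 − q^{s−ν+l} are nonzero and the series converges absolutely, so the expression is well defined; this expresses the special value ζ_q^{(ν)}(1−m,z) = −B_m^{(ν)}(z;q)/m of the meromorphic continuation of ζ_q^{(ν)}(s,z).) -/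
/-!
Near `s = 1 - m` every summand is continuous in `s` except the one of index `l = m + ν - 1`,
where the vanishing factor `s + m - 1` of `(s)_l` cancels the simple zero of `1 - q^(s + m - 1)`
and leaves `-1 / log q` times a ratio of factorials. Since `|(s)_l| / l! ≤ C(l + m - 1, m - 1)` and
`q^(z (s - ν + l)) ≤ const · (q^z)^l`, the summands are dominated by a summable sequence, so the
limit can be taken termwise (Tannery's theorem). At `s = 1 - m` the regular terms with `l ≥ m`
vanish because `(1 - m)_l = 0`, and `l · C(m, l) = m · C(m - 1, l - 1)` turns the remaining finite
sum into the one defining `B_m^{(ν)}(z; q)`.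
-/

open Complex Filter

/-- the `q`-Bernoulli polynomial `B_m^{(ν)}(z;q)` (closed form). -/
noncomputable def Bq (q : ℝ) (ν : ℕ) (z : ℂ) (m : ℕ) : ℂ :=
  ((q : ℂ) - 1) ^ ((1 : ℤ) - m) *
    ((∑ l ∈ Finset.Icc 1 m, (-1) ^ l * (Nat.choose m l : ℂ) * (l : ℂ) *
        qpow q (z * (1 - (l : ℂ) - (ν : ℂ))) / (1 - qpow q (1 - (l : ℂ) - (ν : ℂ)))) +
      (1 / (Nat.choose (m + ν - 1) (ν - 1) : ℂ)) * (1 / (Real.log q : ℂ)))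

open Topology
open scoped Nat

section qpow

variable {q : ℝ}

lemma qpow_ofReal (hq : 0 < q) (x : ℝ) : qpow q x = ((q ^ x : ℝ) : ℂ) := by
  rw [qpow, Real.rpow_def_of_pos hq, Complex.ofReal_exp]
  push_cast
  ring_nf

@[fun_prop]
lemma continuous_qpow : Continuous (qpow q) := by
  unfold qpow
  fun_prop

lemma one_sub_qpow_ofReal_ne_zero (hq : Real.log q ≠ 0) {x : ℝ} (hx : x ≠ 0) :
    1 - qpow q x ≠ 0 := by
  rw [qpow, ← Complex.ofReal_mul, ← Complex.ofReal_exp, sub_ne_zero, ne_comm, Ne,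
    Complex.ofReal_eq_one, Real.exp_eq_one_iff]
  exact mul_ne_zero hx hq

lemma tendsto_div_one_sub_qpow (hq : Real.log q ≠ 0) :
    Tendsto (fun t : ℝ => (t : ℂ) / (1 - qpow q t)) (𝓝[≠] 0) (𝓝 (-1 / Real.log q)) := by
  have hderiv : HasDerivAt (fun t : ℝ => qpow q t) (Real.log q) 0 := by
    simpa [qpow] using ((hasDerivAt_id ((0 : ℝ) : ℂ)).mul_const (Real.log q : ℂ)).cexp.comp_ofReal
  have hslope := (hasDerivAt_iff_tendsto_slope.1 hderiv).inv₀ (by exact_mod_cast hq) |>.neg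
  rw [neg_div, one_div]
  refine hslope.congr fun t => ?_
  simp only [slope_def_module, Complex.real_smul, sub_zero, Complex.ofReal_zero, qpow, zero_mul,
    Complex.exp_zero, Complex.ofReal_inv]
  rw [mul_inv, inv_inv, div_eq_mul_inv, ← neg_sub, inv_neg, mul_neg, neg_neg]

lemma norm_qpow_div_one_sub_qpow_le (hq0 : 0 < q) (hq1 : q < 1) (z : ℝ) {x : ℝ} (hx : 1 ≤ x) :
    ‖qpow q (z * x) / (1 - qpow q x)‖ ≤ q ^ (z * x) / (1 - q) := by
  have hqx : q ^ x ≤ q := by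
    simpa using Real.rpow_le_rpow_of_exponent_ge hq0 hq1.le hx
  rw [← Complex.ofReal_mul, qpow_ofReal hq0, qpow_ofReal hq0, ← Complex.ofReal_one,
    ← Complex.ofReal_sub, ← Complex.ofReal_div, Complex.norm_real, Real.norm_eq_abs,
    abs_of_nonneg (div_nonneg (by positivity) (by linarith))]
  gcongr

end qpow

section ascPochhammer

lemma norm_ascPochhammer_eval_le {R : Type*} [NormedRing R] [NormOneClass R] {x : R} {a : ℝ}
    (hx : ‖x‖ ≤ a) (n : ℕ) : ‖(ascPochhammer R n).eval x‖ ≤ (ascPochhammer ℝ n).eval a := by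
  induction n with
  | zero => simp
  | succ n ih =>
    rw [ascPochhammer_succ_eval, ascPochhammer_succ_eval]
    refine (norm_mul_le _ _).trans (mul_le_mul ih ?_ (norm_nonneg _) ((norm_nonneg _).trans ih))
    exact (norm_add_le _ _).trans (add_le_add hx (by simpa using Nat.norm_cast_le (α := R) n))

lemma ascPochhammer_eval_neg_natCast {R : Type*} [CommRing R] (k i : ℕ) :
    (ascPochhammer R i).eval (-(k : R)) = (-1) ^ i * i ! * k.choose i := by
  rw [ascPochhammer_eval_neg_eq_descPochhammer, descPochhammer_eval_eq_descFactorial,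
    Nat.descFactorial_eq_factorial_mul_choose, Nat.cast_mul, mul_assoc]

lemma ascPochhammer_eval_natCast_add_one {R : Type*} [Semiring R] (k l : ℕ) :
    (ascPochhammer R l).eval ((k : R) + 1) = l ! * (l + k).choose k := by
  rw [← Nat.cast_add_one, ascPochhammer_nat_eq_natCast_ascFactorial,
    Nat.ascFactorial_eq_factorial_mul_choose, add_comm k l, ← Nat.choose_symm_add, Nat.cast_mul]

lemma ascPochhammer_eval_add_one_add {R : Type*} [CommSemiring R] (k n : ℕ) (x : R) :
    (ascPochhammer R (k + 1 + n)).eval x =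
      (ascPochhammer R k).eval x * (x + k) * (ascPochhammer R n).eval (x + k + 1) := by
  rw [← ascPochhammer_mul, Polynomial.eval_mul, Polynomial.eval_comp, ascPochhammer_succ_eval]
  simp [add_assoc]

end ascPochhammer

lemma sum_Icc_neg_one_pow_mul_choose_mul {R : Type*} [CommRing R] (k : ℕ) (f : ℕ → R) :
    ∑ l ∈ Finset.Icc 1 (k + 1), (-1) ^ l * ((k + 1).choose l : R) * l * f l =
      (-1) ^ (k + 1) * (k + 1) *
        ∑ i ∈ Finset.range (k + 1), (-1) ^ i * (k.choose i : R) * f (k + 1 - i) := by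
  rw [Finset.mul_sum]
  refine Finset.sum_nbij' (fun l => k + 1 - l) (fun i => k + 1 - i) ?_ ?_ ?_ ?_ ?_
  iterate 4 (intro l hl; simp only [Finset.mem_Icc, Finset.mem_range] at hl ⊢; omega)
  intro l hl
  obtain ⟨j, i, rfl, rfl⟩ : ∃ j i, l = j + 1 ∧ k = i + j := by
    simp only [Finset.mem_Icc] at hl; exact ⟨l - 1, k + 1 - l, by omega, by omega⟩
  have hidx : i + j + 1 - (j + 1) = i := by omega
  have hchoose : ((i + j + 1 : ℕ) : R) * ((i + j).choose j : R) =
      ((i + j + 1).choose (j + 1) : R) * ((j + 1 : ℕ) : R) := by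
    rw [← Nat.cast_mul, ← Nat.cast_mul, Nat.add_one_mul_choose_eq]
  have hsign : ((-1 : R) ^ i) ^ 2 = 1 := by rw [← pow_mul, mul_comm, pow_mul]; simp
  rw [hidx, show i + j + 1 - i = j + 1 by omega, Nat.choose_symm_add]
  push_cast at hchoose ⊢
  linear_combination (-(-1) ^ (j + 1) * f (j + 1)) * hchoose
    - (-1) ^ (j + 1) * f (j + 1) * (i + j + 1 : R) * (i + j).choose j * hsign

noncomputable def qBernoulliSummand (q : ℝ) (ν : ℕ) (z : ℂ) (l : ℕ) : ℂ :=
  qpow q (z * (1 - l - ν)) / (1 - qpow q (1 - l - ν))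

lemma Bq_eq_sum_qBernoulliSummand (q : ℝ) (ν : ℕ) (z : ℂ) (m : ℕ) :
    Bq q ν z m = ((q : ℂ) - 1) ^ ((1 : ℤ) - m) *
      (∑ l ∈ Finset.Icc 1 m, (-1) ^ l * (m.choose l : ℂ) * l * qBernoulliSummand q ν z l +
        1 / (m + ν - 1).choose (ν - 1) * (1 / Real.log q)) := by
  simp only [Bq, qBernoulliSummand, mul_div_assoc]

noncomputable def zetaTerm (q z : ℝ) (ν : ℕ) (s : ℝ) (l : ℕ) : ℂ :=
  (ascPochhammer ℂ l).eval (s : ℂ) / (Nat.factorial l : ℂ) *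
    qpow q ((z : ℂ) * ((s : ℂ) - (ν : ℂ) + (l : ℂ))) / (1 - qpow q ((s : ℂ) - (ν : ℂ) + (l : ℂ)))

section zetaTerm

variable {q : ℝ} (z : ℝ)

lemma continuousAt_zetaTerm (hq : Real.log q ≠ 0) (ν l : ℕ) {s₀ : ℝ} (h : s₀ - ν + l ≠ 0) :
    ContinuousAt (fun s => zetaTerm q z ν s l) s₀ := by
  have hden := one_sub_qpow_ofReal_ne_zero hq h
  push_cast at hden
  unfold zetaTerm
  exact ContinuousAt.div (by fun_prop) (by fun_prop) hden

lemma tendsto_zetaTerm_pole (hq : Real.log q ≠ 0) (k n : ℕ) :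
    Tendsto (fun s => zetaTerm q z (n + 1) s (k + 1 + n)) (𝓝[≠] (-k : ℝ))
      (𝓝 ((-1) ^ (k + 1) / ((k + 1) * (k + 1 + n).choose n * Real.log q))) := by
  have hfactor : ∀ s : ℝ, zetaTerm q z (n + 1) s (k + 1 + n) =
      ((s + k : ℝ) : ℂ) / (1 - qpow q (s + k : ℝ)) *
        ((ascPochhammer ℂ k).eval (s : ℂ) * (ascPochhammer ℂ n).eval ((s : ℂ) + k + 1) *
          qpow q (z * (s + k : ℝ)) / (k + 1 + n)!) := by
    intro s
    have harg : (s : ℂ) - ((n + 1 : ℕ) : ℂ) + ((k + 1 + n : ℕ) : ℂ) = ((s + k : ℝ) : ℂ) := by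
      push_cast; ring
    rw [zetaTerm, harg, ascPochhammer_eval_add_one_add]
    push_cast
    ring
  have hshift : Tendsto (fun s : ℝ => s + k) (𝓝[≠] (-k)) (𝓝[≠] 0) := by
    refine tendsto_nhdsWithin_of_tendsto_nhds_of_eventually_within _ ?_ ?_
    · exact (Continuous.tendsto' (by fun_prop) _ _ (by simp)).mono_left nhdsWithin_le_nhds
    · filter_upwards [self_mem_nhdsWithin] with s (hs : s ≠ -k)
      exact fun h => hs (eq_neg_of_add_eq_zero_left h)
  have hregular : Tendsto (fun s : ℝ => (ascPochhammer ℂ k).eval (s : ℂ) *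
      (ascPochhammer ℂ n).eval ((s : ℂ) + k + 1) * qpow q (z * (s + k : ℝ)) / (k + 1 + n)!)
      (𝓝[≠] (-k)) (𝓝 ((-1) ^ k * k ! * n ! / (k + 1 + n)!)) := by
    refine (Continuous.tendsto' (by fun_prop) _ _ ?_).mono_left nhdsWithin_le_nhds
    simp [ascPochhammer_eval_neg_natCast, qpow]
  have hfac : ((k + 1 + n)! : ℂ) = (k + 1 + n).choose n * ((k + 1) * k !) * n ! := by
    rw [← Nat.add_choose_mul_factorial_mul_factorial, Nat.factorial_succ]
    push_cast; ring
  have hlim := ((tendsto_div_one_sub_qpow hq).comp hshift).mul hregular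
  convert hlim using 1
  · funext s; exact hfactor s
  · rw [hfac]
    have hkf : (k ! : ℂ) ≠ 0 := by exact_mod_cast k.factorial_ne_zero
    have hnf : (n ! : ℂ) ≠ 0 := by exact_mod_cast n.factorial_ne_zero
    congr 1
    field_simp
    ring

lemma zetaTerm_neg_natCast (ν k l : ℕ) :
    zetaTerm q z ν (-k) l =
      (-1) ^ l * k.choose l * (qpow q (z * (-k - ν + l)) / (1 - qpow q (-k - ν + l))) := by
  have hl : (l ! : ℂ) ≠ 0 := by exact_mod_cast l.factorial_ne_zero
  rw [zetaTerm, Complex.ofReal_neg, Complex.ofReal_natCast, ascPochhammer_eval_neg_natCast]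
  field_simp

variable {z}

lemma norm_zetaTerm_le (hq0 : 0 < q) (hq1 : q < 1) (hz : 0 < z) {k ν l : ℕ} {s : ℝ}
    (hs : |s| ≤ k + 1) (hl : k + 1 + ν < l) :
    ‖zetaTerm q z ν s l‖ ≤ (l + k).choose k * (q ^ z) ^ l / ((1 - q) * (q ^ z) ^ (k + 1 + ν)) := by
  have hlf : (0 : ℝ) < l ! := by exact_mod_cast l.factorial_pos
  have hpoch : ‖(ascPochhammer ℂ l).eval (s : ℂ) / (l ! : ℂ)‖ ≤ (l + k).choose k := by
    have := norm_ascPochhammer_eval_le (x := (s : ℂ)) (by simpa using hs) l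
    rw [ascPochhammer_eval_natCast_add_one] at this
    rw [norm_div, Complex.norm_natCast, div_le_iff₀ hlf]
    linarith
  set x := s - ν + l with hx
  have hx1 : (1 : ℝ) ≤ l - (k + 1 + ν) := by
    have : ((k + 1 + ν + 1 : ℕ) : ℝ) ≤ l := by exact_mod_cast hl
    push_cast at this; linarith
  have hxl : (l : ℝ) - (k + 1 + ν) ≤ x := by
    have := (abs_le.1 hs).1; linarith
  have hdecay : q ^ (z * x) ≤ (q ^ z) ^ l / (q ^ z) ^ (k + 1 + ν) := calc
    q ^ (z * x) ≤ q ^ (z * (l - (k + 1 + ν))) :=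
      Real.rpow_le_rpow_of_exponent_ge hq0 hq1.le (by gcongr)
    _ = (q ^ z) ^ l / (q ^ z) ^ (k + 1 + ν) := by
      rw [Real.rpow_mul hq0.le, Real.rpow_sub (by positivity), ← Real.rpow_natCast,
        ← Real.rpow_natCast]
      push_cast; ring_nf
  have hxC : (s : ℂ) - ν + l = (x : ℂ) := by push_cast [hx]; ring
  rw [zetaTerm, hxC, mul_div_assoc, norm_mul]
  calc _ ≤ (l + k).choose k * (q ^ (z * x) / (1 - q)) :=
        mul_le_mul hpoch (norm_qpow_div_one_sub_qpow_le hq0 hq1 z (hx1.trans hxl)) (norm_nonneg _)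
          (by positivity)
    _ ≤ (l + k).choose k * ((q ^ z) ^ l / (q ^ z) ^ (k + 1 + ν) / (1 - q)) := by
        gcongr
    _ = _ := by field_simp

end zetaTerm

/-- The limit of `zetaTerm q z (n + 1) s l` as `s → -k`: only the index `l = k + 1 + n` meets the
pole of `1 - q ^ (s - ν + l)`. -/
noncomputable def zetaTermLim (q z : ℝ) (k n l : ℕ) : ℂ :=
  if l = k + 1 + n then (-1) ^ (k + 1) / ((k + 1) * (k + 1 + n).choose n * Real.log q)
  else zetaTerm q z (n + 1) (-k) l

section zetaTermLim

variable {q : ℝ} (z : ℝ)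

lemma tendsto_zetaTerm (hq : Real.log q ≠ 0) (k n l : ℕ) :
    Tendsto (fun s => zetaTerm q z (n + 1) s l) (𝓝[≠] (-k : ℝ)) (𝓝 (zetaTermLim q z k n l)) := by
  unfold zetaTermLim
  split_ifs with hl
  · subst hl
    exact tendsto_zetaTerm_pole z hq k n
  · refine (continuousAt_zetaTerm z hq (n + 1) l ?_).tendsto.mono_left nhdsWithin_le_nhds
    intro h
    apply hl
    have : (l : ℝ) = k + 1 + n := by push_cast at h; linarith
    exact_mod_cast this

lemma tsum_zetaTermLim (k n : ℕ) :
    ∑' l, zetaTermLim q z k n l =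
      (-1) ^ (k + 1) / ((k + 1) * (k + 1 + n).choose n * Real.log q) +
        ∑ i ∈ Finset.range (k + 1), (-1) ^ i * (k.choose i : ℂ) *
          qBernoulliSummand q (n + 1) z (k + 1 - i) := by
  have hpole : k + 1 + n ∉ Finset.range (k + 1) := by rw [Finset.mem_range]; omega
  rw [tsum_eq_sum (s := insert (k + 1 + n) (Finset.range (k + 1))), Finset.sum_insert hpole,
    zetaTermLim, if_pos rfl]
  · congr 1
    refine Finset.sum_congr rfl fun i hi => ?_
    have hik : i ≤ k := Finset.mem_range_succ_iff.1 hi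
    rw [zetaTermLim, if_neg (by omega), zetaTerm_neg_natCast, qBernoulliSummand,
      Nat.cast_sub (by omega)]
    push_cast
    ring_nf
  · intro l hl
    simp only [Finset.mem_insert, Finset.mem_range, not_or] at hl
    rw [zetaTermLim, if_neg hl.1, zetaTerm_neg_natCast, Nat.choose_eq_zero_of_lt (by omega)]
    simp

end zetaTermLim

lemma tendsto_tsum_zetaTerm {q z : ℝ} (hq0 : 0 < q) (hq1 : q < 1) (hz : 0 < z) (k n : ℕ) :
    Tendsto (fun s => ∑' l, zetaTerm q z (n + 1) s l) (𝓝[≠] (-k : ℝ))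
      (𝓝 (∑' l, zetaTermLim q z k n l)) := by
  have hq : Real.log q ≠ 0 := Real.log_ne_zero_of_pos_of_ne_one hq0 hq1.ne
  set N := k + 1 + (n + 1)
  set r := q ^ z
  have hr : ‖r‖ < 1 := by
    rw [Real.norm_of_nonneg (by positivity)]
    exact Real.rpow_lt_one hq0.le hq1 hz
  let bound : ℕ → ℝ := fun l => (if l ≤ N then ‖zetaTermLim q z k n l‖ + 1 else 0) +
    (l + k).choose k * r ^ l / ((1 - q) * r ^ N)
  have hsum : Summable bound := by
    refine .add (summable_of_ne_finset_zero (s := Finset.range (N + 1)) fun l hl => ?_)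
      ((summable_choose_mul_geometric_of_norm_lt_one k hr).div_const _)
    rw [Finset.mem_range] at hl
    rw [if_neg (by omega)]
  refine tendsto_tsum_of_dominated_convergence hsum (tendsto_zetaTerm z hq k n) ?_
  have hnear : ∀ᶠ s : ℝ in 𝓝[≠] (-k : ℝ), |s| ≤ k + 1 := by
    filter_upwards [nhdsWithin_le_nhds (Icc_mem_nhds (show (-k : ℝ) - 1 < -k by linarith)
      (show (-k : ℝ) < -k + 1 by linarith))] with s hs
    exact abs_le.2 ⟨by linarith [hs.1], by linarith [hs.2]⟩
  have hinitial : ∀ᶠ s in 𝓝[≠] (-k : ℝ), ∀ l ∈ Finset.range (N + 1),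
      ‖zetaTerm q z (n + 1) s l‖ ≤ ‖zetaTermLim q z k n l‖ + 1 :=
    Filter.eventually_all_finset _ |>.2 fun l _ =>
      (tendsto_zetaTerm z hq k n l).norm.eventually_le_const (lt_add_one _)
  filter_upwards [hnear, hinitial] with s hs hle l
  have htail : 0 ≤ (l + k).choose k * r ^ l / ((1 - q) * r ^ N) := by
    have : 0 < 1 - q := by linarith
    positivity
  by_cases hl : l ≤ N
  · have := hle l (Finset.mem_range_succ_iff.2 hl)
    simp only [bound, if_pos hl]
    linarith
  · simp only [bound, if_neg hl, zero_add]
    exact norm_zetaTerm_le hq0 hq1 hz hs (by omega)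

lemma exp_mul_tsum_zetaTermLim {q : ℝ} (hq0 : 0 < q) (hq1 : q < 1) (z : ℝ) (k n : ℕ) :
    Complex.exp ((-k : ℝ) * Real.log (1 - q)) * ∑' l, zetaTermLim q z k n l =
      -Bq q (n + 1) z (k + 1) / ((k + 1 : ℕ) : ℂ) := by
  have hlog : (Real.log q : ℂ) ≠ 0 := by exact_mod_cast Real.log_ne_zero_of_pos_of_ne_one hq0 hq1.ne
  have h1q : (1 : ℂ) - q ≠ 0 := by exact_mod_cast (sub_pos.2 hq1).ne'
  have hchoose : ((k + 1 + n).choose n : ℂ) ≠ 0 := by exact_mod_cast (Nat.choose_pos (by omega)).ne'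
  have hexp : Complex.exp ((-k : ℝ) * Real.log (1 - q)) = ((((1 - q : ℝ) : ℂ)) ^ k)⁻¹ := by
    rw [← Complex.ofReal_mul, ← Complex.ofReal_exp, neg_mul, Real.exp_neg, Real.exp_nat_mul,
      Real.exp_log (by linarith)]
    push_cast; rfl
  have hzpow : ((q : ℂ) - 1) ^ ((1 : ℤ) - (k + 1 : ℕ)) = ((-1) ^ k * ((1 - q : ℝ) : ℂ) ^ k)⁻¹ := by
    rw [show (1 : ℤ) - (k + 1 : ℕ) = -k by push_cast; ring, zpow_neg, zpow_natCast, ← mul_pow]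
    push_cast; ring_nf
  have hsign : ((-1 : ℂ) ^ k) ^ 2 = 1 := by rw [← pow_mul, mul_comm, pow_mul]; simp
  rw [tsum_zetaTermLim, Bq_eq_sum_qBernoulliSummand, sum_Icc_neg_one_pow_mul_choose_mul, hexp,
    hzpow, show k + 1 + (n + 1) - 1 = k + 1 + n by omega, Nat.add_sub_cancel]
  push_cast
  field_simp
  linear_combination -hsign

theorem stmt16 (q : ℝ) (hq0 : 0 < q) (hq1 : q < 1) (ν : ℕ) (hν : 0 < ν)
    (z : ℝ) (hz : 0 < z) (m : ℕ) (hm : 1 ≤ m) :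
    Tendsto (fun s : ℝ =>
        Complex.exp ((s : ℂ) * Real.log (1 - q)) *
          ∑' l : ℕ, ((ascPochhammer ℂ l).eval (s : ℂ) / (Nat.factorial l : ℂ)) *
            qpow q ((z : ℂ) * ((s : ℂ) - (ν : ℂ) + (l : ℂ))) /
              (1 - qpow q ((s : ℂ) - (ν : ℂ) + (l : ℂ))))
      (nhdsWithin ((1 : ℝ) - m) {s : ℝ | ∀ k : ℤ, s ≠ (k : ℝ)})
      (nhds (-(Bq q ν (z : ℂ) m) / (m : ℂ))) := by
  obtain ⟨k, rfl⟩ : ∃ k, m = k + 1 := ⟨m - 1, by omega⟩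
  obtain ⟨n, rfl⟩ : ∃ n, ν = n + 1 := ⟨ν - 1, by omega⟩
  have hpoint : (1 : ℝ) - (k + 1 : ℕ) = -k := by push_cast; ring
  have hexp : Tendsto (fun s : ℝ => Complex.exp (s * Real.log (1 - q))) (𝓝[≠] (-k : ℝ))
      (𝓝 (Complex.exp ((-k : ℝ) * Real.log (1 - q)))) :=
    (Continuous.tendsto (by fun_prop) _).mono_left nhdsWithin_le_nhds
  have hlim := hexp.mul (tendsto_tsum_zetaTerm hq0 hq1 hz k n)
  rw [exp_mul_tsum_zetaTermLim hq0 hq1] at hlim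
  rw [hpoint]
  refine hlim.mono_left (nhdsWithin_mono _ fun s hs => ?_)
  simpa using hs (-k)
end

section
/- Let ν be a positive integer, let z > 0 be real and let s ∈ ℂ with Re(s) > ν + 1. Then, as q tends to 1 from below, ζ_q^{(ν)}(s,z) := Σ_{n=0}^∞ q^{(n+z)(s−ν)}·[n+z]_q^{−s} converges to the Hurwitz zeta value ζ(s,z) = Σ_{n=0}^∞ (n+z)^{−s}. -/
open Complex Filter

/-- `ζ_q^{(ν)}(s,z) := Σ_{n≥0} q^{(n+z)(s−ν)} · [n+z]_q^{−s}` for real `z > 0`,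
where `[n+z]_q = (1 − q^{n+z})/(1 − q)` is a positive real and
`[n+z]_q^{−s} := exp(−s · ln [n+z]_q)`. -/
noncomputable def zetaQReal (q : ℝ) (ν : ℕ) (s : ℂ) (z : ℝ) : ℂ :=
  ∑' n : ℕ, qpow q (((n : ℂ) + (z : ℂ)) * (s - (ν : ℂ))) *
    Complex.exp (-s * Real.log ((1 - q ^ ((n : ℝ) + z)) / (1 - q)))

/-!
Dominated convergence. Termwise, `q^{(n+z)(s-ν)} → 1` and `[n+z]_q → n+z` (the derivative of
`x ↦ x^{n+z}` at `1`). For the domination write `a = n+z`, `σ = Re s`, `c = σ - ν > 0` and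
`u = a(1-q)`: from `q^a ≤ e^{-u} ≤ 1/(1+u)` one gets `[a]_q ≥ a/(1+u)` and `q^{ac} ≤ e^{-cu}`, so
the `n`-th term has modulus at most `(1+u)^σ e^{-cu} a^{-σ}`, and `(1+u)^σ e^{-cu}` is bounded
in `u`. Since `σ > 1`, `Σ (n+z)^{-σ}` converges.
-/

open Topology

noncomputable def qNum (q a : ℝ) : ℝ := (1 - q ^ a) / (1 - q)

section Bounds

open Real

variable {q a : ℝ}

lemma qNum_pos (hq0 : 0 < q) (hq1 : q < 1) (ha : 0 < a) : 0 < qNum q a :=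
  div_pos (sub_pos.2 (rpow_lt_one hq0.le hq1 ha)) (sub_pos.2 hq1)

lemma rpow_le_exp_neg_mul_one_sub (hq : 0 < q) (ha : 0 ≤ a) :
    q ^ a ≤ Real.exp (-(a * (1 - q))) := by
  rw [rpow_def_of_pos hq, exp_le_exp]
  nlinarith [log_le_sub_one_of_pos hq]

lemma div_one_add_le_qNum (hq0 : 0 < q) (hq1 : q < 1) (ha : 0 ≤ a) :
    a / (1 + a * (1 - q)) ≤ qNum q a := by
  have hu : 0 ≤ a * (1 - q) := mul_nonneg ha (by linarith)
  have hexp : q ^ a ≤ 1 / (1 + a * (1 - q)) :=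
    (rpow_le_exp_neg_mul_one_sub hq0 ha).trans <| by
      rw [Real.exp_neg, inv_eq_one_div]
      gcongr
      linarith [Real.add_one_le_exp (a * (1 - q))]
  rw [qNum, le_div_iff₀ (by linarith), div_mul_eq_mul_div, div_le_iff₀ (by linarith)]
  rw [le_div_iff₀ (by linarith)] at hexp
  nlinarith

-- The right-hand side is the maximum over `u`, attained at `1 + u = σ / c`.
lemma one_add_rpow_mul_exp_neg_le {c σ u : ℝ} (hc : 0 < c) (hσ : 0 < σ) (hu : -1 < u) :
    (1 + u) ^ σ * Real.exp (-(c * u)) ≤ (σ / c) ^ σ * Real.exp (c - σ) := by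
  have hlog : Real.log (c * (1 + u) / σ) ≤ c * (1 + u) / σ - 1 :=
    log_le_sub_one_of_pos (div_pos (mul_pos hc (by linarith)) hσ)
  rw [Real.log_div (mul_pos hc (by linarith)).ne' hσ.ne', Real.log_mul hc.ne' (by linarith)] at hlog
  rw [rpow_def_of_pos (by linarith), rpow_def_of_pos (by positivity), ← Real.exp_add,
    ← Real.exp_add, Real.exp_le_exp, Real.log_div hσ.ne' hc.ne']
  have : σ * (c * (1 + u) / σ) = c * (1 + u) := by field_simp
  nlinarith

lemma rpow_mul_qNum_rpow_neg_le {c σ : ℝ} (hq0 : 0 < q) (hq1 : q < 1) (ha : 0 < a)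
    (hc : 0 < c) (hσ : 0 < σ) :
    q ^ (a * c) * qNum q a ^ (-σ) ≤ (σ / c) ^ σ * Real.exp (c - σ) * a ^ (-σ) := by
  set u := a * (1 - q) with hu
  have hu0 : 0 ≤ u := mul_nonneg ha.le (by linarith)
  have hpow : q ^ (a * c) ≤ Real.exp (-(c * u)) :=
    (rpow_le_exp_neg_mul_one_sub hq0 (mul_nonneg ha.le hc.le)).trans_eq (by rw [hu]; ring_nf)
  have hqNum : qNum q a ^ (-σ) ≤ (1 + u) ^ σ * a ^ (-σ) := by
    calc qNum q a ^ (-σ) ≤ (a / (1 + u)) ^ (-σ) :=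
          rpow_le_rpow_of_nonpos (by positivity) (div_one_add_le_qNum hq0 hq1 ha.le) (by linarith)
      _ = (1 + u) ^ σ * a ^ (-σ) := by
          rw [div_rpow ha.le (by linarith), rpow_neg (by linarith : (0 : ℝ) ≤ 1 + u),
            div_eq_mul_inv, inv_inv, mul_comm]
  calc q ^ (a * c) * qNum q a ^ (-σ) ≤ Real.exp (-(c * u)) * ((1 + u) ^ σ * a ^ (-σ)) :=
        mul_le_mul hpow hqNum (by have := qNum_pos hq0 hq1 ha; positivity) (Real.exp_pos _).le
    _ = (1 + u) ^ σ * Real.exp (-(c * u)) * a ^ (-σ) := by ring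
    _ ≤ (σ / c) ^ σ * Real.exp (c - σ) * a ^ (-σ) :=
        mul_le_mul_of_nonneg_right (one_add_rpow_mul_exp_neg_le hc hσ (by linarith))
          (rpow_nonneg ha.le _)

end Bounds

lemma tendsto_qNum (a : ℝ) : Tendsto (qNum · a) (𝓝[≠] 1) (𝓝 a) := by
  have hderiv : HasDerivAt (fun x : ℝ => x ^ a) a 1 := by
    simpa using Real.hasDerivAt_rpow_const (x := 1) (p := a) (Or.inl one_ne_zero)
  refine (hasDerivAt_iff_tendsto_slope.mp hderiv).congr fun q => ?_
  rw [slope_def_field, Real.one_rpow, qNum, ← neg_div_neg_eq, neg_sub, neg_sub]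

lemma exp_mul_ofReal_log {x : ℝ} (hx : 0 < x) (w : ℂ) :
    Complex.exp (w * Real.log x) = (x : ℂ) ^ w := by
  rw [cpow_def_of_ne_zero (ofReal_ne_zero.2 hx.ne'), ofReal_log hx.le, mul_comm]

lemma zetaQReal_eq_tsum_cpow {q z : ℝ} (hq0 : 0 < q) (hq1 : q < 1) (hz : 0 < z) (ν : ℕ) (s : ℂ) :
    zetaQReal q ν s z =
      ∑' n : ℕ, (q : ℂ) ^ (((n + z : ℝ) : ℂ) * (s - ν)) * (qNum q (n + z) : ℂ) ^ (-s) := by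
  refine tsum_congr fun n => ?_
  rw [qpow, exp_mul_ofReal_log hq0, ← exp_mul_ofReal_log (qNum_pos hq0 hq1 (by positivity))]
  push_cast
  rfl

lemma tendsto_cpow_mul_qNum_cpow {a : ℝ} (ha : 0 < a) (w s : ℂ) :
    Tendsto (fun q : ℝ => (q : ℂ) ^ w * (qNum q a : ℂ) ^ (-s)) (𝓝[≠] 1) (𝓝 ((a : ℂ) ^ (-s))) := by
  have hpow : Tendsto (fun q : ℝ => (q : ℂ) ^ w) (𝓝 1) (𝓝 1) := by
    simpa [Function.comp_def] using
      (continuousAt_cpow_const (b := w) (by simp : (1 : ℂ) ∈ slitPlane)).tendsto.comp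
        (continuous_ofReal.tendsto 1)
  have hqNum : Tendsto (fun q : ℝ => (qNum q a : ℂ) ^ (-s)) (𝓝[≠] 1) (𝓝 ((a : ℂ) ^ (-s))) :=
    (continuousAt_cpow_const (ofReal_mem_slitPlane.2 ha)).tendsto.comp
      ((continuous_ofReal.tendsto a).comp (tendsto_qNum a))
  simpa using (hpow.mono_left nhdsWithin_le_nhds).mul hqNum

lemma norm_cpow_mul_qNum_cpow_le {q a t : ℝ} {s : ℂ} (hq0 : 0 < q) (hq1 : q < 1) (ha : 0 < a)
    (ht : t < s.re) (hs : 0 < s.re) :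
    ‖(q : ℂ) ^ ((a : ℂ) * (s - t)) * (qNum q a : ℂ) ^ (-s)‖ ≤
      (s.re / (s.re - t)) ^ s.re * Real.exp (-t) * a ^ (-s.re) := by
  rw [norm_mul, norm_cpow_eq_rpow_re_of_pos hq0, norm_cpow_eq_rpow_re_of_pos (qNum_pos hq0 hq1 ha)]
  have hre : ((a : ℂ) * (s - t)).re = a * (s.re - t) := by simp
  have := rpow_mul_qNum_rpow_neg_le hq0 hq1 ha (sub_pos.2 ht) hs
  rw [sub_sub_cancel_left] at this
  rwa [hre, neg_re]

theorem stmt18_general (ν : ℕ) (z : ℝ) (hz : 0 < z)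
    (s : ℂ) (hs : (ν : ℝ) + 1 < s.re) :
    Tendsto (fun q : ℝ => zetaQReal q ν s z) (nhdsWithin 1 (Set.Ioo (0 : ℝ) 1))
      (nhds (∑' n : ℕ, Complex.exp (-s * Real.log ((n : ℝ) + z)))) := by
  have ha (n : ℕ) : 0 < (n : ℝ) + z := by positivity
  have hs1 : 1 < s.re := by linarith [(ν.cast_nonneg : (0 : ℝ) ≤ ν)]
  set C := (s.re / (s.re - ν)) ^ s.re * Real.exp (-ν)
  have hsum : Summable fun n : ℕ => C * ((n : ℝ) + z) ^ (-s.re) := by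
    refine (((Real.summable_one_div_nat_add_rpow z s.re).2 hs1).mul_left C).congr fun n => ?_
    rw [abs_of_pos (ha n), Real.rpow_neg (ha n).le, one_div]
  rw [tsum_congr fun n => exp_mul_ofReal_log (ha n) (-s)]
  have hterm (n : ℕ) :=
    (tendsto_cpow_mul_qNum_cpow (ha n) (((n + z : ℝ) : ℂ) * (s - ν)) s).mono_left
      (nhdsWithin_mono 1 fun q (hq : q ∈ Set.Ioo 0 1) => hq.2.ne)
  refine (tendsto_tsum_of_dominated_convergence hsum hterm ?_).congr' ?_
  · filter_upwards [self_mem_nhdsWithin] with q ⟨hq0, hq1⟩ n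
    exact norm_cpow_mul_qNum_cpow_le hq0 hq1 (ha n) (by linarith) (by linarith)
  · filter_upwards [self_mem_nhdsWithin] with q ⟨hq0, hq1⟩
    exact (zetaQReal_eq_tsum_cpow hq0 hq1 hz ν s).symm

theorem stmt18 (ν : ℕ) (hν : 0 < ν) (z : ℝ) (hz : 0 < z)
    (s : ℂ) (hs : (ν : ℝ) + 1 < s.re) :
    Tendsto (fun q : ℝ => zetaQReal q ν s z) (nhdsWithin 1 (Set.Ioo (0 : ℝ) 1))
      (nhds (∑' n : ℕ, Complex.exp (-s * Real.log ((n : ℝ) + z)))) :=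
  stmt18_general ν z hz s hs
end
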